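/- arXiv:2009.06298 — 2 statements merged into one kernel-verified Lean document; each statement's English description precedes it below -/
import Mathlib

section
/- In the setting where q is an odd prime power, n ≥ 6 an even integer with (n+1) | (q−1), β ∈ F_q\{0}, m(x) = (x^{n+1} − β^{n+1})/(x − β) has roots α_1,…,α_n in F_q, v_i ∈ F_{q²} satisfies v_i² = α_i(α_i − β), and η := 2β^{−1}: if Σ_{i∈I} α_i ≠ −β/2 for every subset I ⊆ {1,…,n} with |I| = n/2, then C_{n/2}(α,v,η) is a self-dual MDS code of length n over F_{q²}; otherwise C_{n/2}(α,v,η) is a self-dual NMDS code of length n over F_{q²}. -/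
open Finset Polynomial

noncomputable section

/-- The twisted generalized Reed–Solomon (TGRS) code of length `n` and dimension `k`,
with evaluation points `α`, multipliers `v`, hook `k-1`, twist `1` and twist
coefficient `η`:  the set of words `(v i * f (α i))_i` where
`f(x) = Σ_{j<k} a_j x^j + η a_{k-1} x^k`. -/
def TGRSCode (F : Type*) [Field F] (n k : ℕ) (α v : Fin n → F) (η : F) :
    Set (Fin n → F) :=
  {c | ∃ a : ℕ → F, c = fun i =>
    v i * ((∑ j ∈ Finset.range k, a j * α i ^ j) + η * a (k - 1) * α i ^ k)}

/-- The dual of a code `C ⊆ F^n` under the standard inner product. -/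
def dualCode {F : Type*} [Field F] {n : ℕ} (C : Set (Fin n → F)) :
    Set (Fin n → F) :=
  {x | ∀ c ∈ C, ∑ i, x i * c i = 0}

/-- A code is self-dual if it coincides with its dual. -/
def IsSelfDual {F : Type*} [Field F] {n : ℕ} (C : Set (Fin n → F)) : Prop :=
  C = dualCode C

/-- The Hamming weight of a word. -/
def hwt {F : Type*} [Field F] {n : ℕ} (c : Fin n → F) : ℕ :=
  {i | c i ≠ 0}.ncard

/-- `C` has minimum (Hamming) distance exactly `d`. -/
def IsMinDist {F : Type*} [Field F] {n : ℕ} (C : Set (Fin n → F)) (d : ℕ) : Prop :=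
  (∃ c ∈ C, c ≠ 0 ∧ hwt c = d) ∧ ∀ c ∈ C, c ≠ 0 → d ≤ hwt c

open Module

/-!
Together with `β`, the points `α_i` are the `n + 1` distinct roots of `x^{n+1} = β^{n+1}`, so
`∑ α_i^j = -β^j` for `1 ≤ j ≤ n`. With `v_i² = α_i (α_i - β)` the moments `M_m = ∑ v_i² α_i^m`
vanish for `m ≤ n - 2` and `M_n = -β M_{n-1}`. A codeword is `(v_i f(α_i))` with `deg f ≤ k = n/2`,
`f_k = η f_{k-1}`, so the product of two codewords only sees `M_{n-1}` and `M_n`, and for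
`η = 2/β` these contributions cancel: the code is self-orthogonal of dimension `n/2`, hence
self-dual. A nonzero `f` has at most `k` roots among the `α_i`; if it has exactly `k`, then
`f = f_k ∏_{i∈I} (x - α_i)` and comparing `f_{k-1}` with `f_k` gives `∑_{i∈I} α_i = -η⁻¹ = -β/2`.
Conversely such an `I`, or any `k - 1` points completed by one suitable extra root, gives codewords
of weight `n - k`, resp. `n - k + 1`.
-/

namespace FiniteField

variable {K : Type*} [Field K] [Fintype K]

theorem two_ne_zero_of_odd_card (h : Odd (Fintype.card K)) : (2 : K) ≠ 0 := by
  obtain ⟨m, hm⟩ := h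
  intro h2
  have := FiniteField.cast_card_eq_zero (K := K)
  rw [hm] at this
  push_cast at this
  simp [h2] at this

theorem natCast_ne_zero_of_dvd_card_sub_one {d : ℕ} (h : d ∣ Fintype.card K - 1) :
    (d : K) ≠ 0 := by
  obtain ⟨t, ht⟩ := h
  intro hd
  have := FiniteField.cast_card_eq_zero (K := K)
  rw [show Fintype.card K = d * t + 1 by have := Fintype.card_pos (α := K); omega] at this
  push_cast at this
  simp [hd] at this

end FiniteField

section PowerSums

variable {K : Type*} [Field K]

theorem card_nthRootsFinset_le (m : ℕ) (c : K) : #(nthRootsFinset m c) ≤ m := by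
  classical
  rw [nthRootsFinset_def]
  exact (Multiset.toFinset_card_le _).trans (card_nthRoots m c)

theorem sum_pow_nthRootsFinset_eq_zero {m j : ℕ} {c : K} (hc : c ≠ 0)
    (hcard : #(nthRootsFinset m c) = m) (hj₀ : 0 < j) (hjm : j < m) :
    ∑ x ∈ nthRootsFinset m c, x ^ j = 0 := by
  classical
  set S := nthRootsFinset m c
  obtain ⟨x₀, hx₀⟩ : S.Nonempty := card_pos.mp (by omega)
  have hx₀0 : x₀ ≠ 0 := ne_zero_of_mem_nthRootsFinset hc hx₀
  -- the ratios `x / x₀` are `m` distinct roots of unity, too many to be all `j`-th roots of unity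
  obtain ⟨x₁, hx₁, hζ⟩ : ∃ x₁ ∈ S, (x₁ / x₀) ^ j ≠ 1 := by
    by_contra! h
    have hsub : S.image (· / x₀) ⊆ nthRootsFinset j (1 : K) := by
      simpa [image_subset_iff, mem_nthRootsFinset hj₀] using h
    have := (card_le_card hsub).trans (card_nthRootsFinset_le j 1)
    rw [card_image_of_injective _ (fun x y h => by simpa [hx₀0] using h), hcard] at this
    omega
  set ζ := x₁ / x₀
  have hζ0 : ζ ≠ 0 := div_ne_zero (ne_zero_of_mem_nthRootsFinset hc hx₁) hx₀0
  have hζS : ∀ x ∈ S, ζ * x ∈ S := fun x hx => by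
    have hζm : ζ ∈ nthRootsFinset m (1 : K) := by
      rw [mem_nthRootsFinset (by omega)] at hx₀ hx₁ ⊢
      rw [div_pow, hx₀, hx₁, div_self hc]
    simpa using mul_mem_nthRootsFinset hζm hx
  have hperm : S.image (ζ * ·) = S :=
    eq_of_subset_of_card_le (image_subset_iff.mpr hζS)
      (card_image_of_injective _ (mul_right_injective₀ hζ0)).ge
  have hfix : (ζ ^ j - 1) * ∑ x ∈ S, x ^ j = 0 := by
    have : ∑ x ∈ S.image (ζ * ·), x ^ j = ζ ^ j * ∑ x ∈ S, x ^ j := by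
      rw [sum_image fun x _ y _ h => mul_left_cancel₀ hζ0 h, mul_sum]
      simp only [mul_pow]
    rw [hperm] at this
    linear_combination -this
  exact (mul_eq_zero.mp hfix).resolve_left (sub_ne_zero.mpr hζ)

theorem pow_eq_of_prod_X_sub_C_eq {ι : Type*} [Fintype ι] {γ : ι → K} {m : ℕ} {c : K}
    (h : ∏ i, (X - C (γ i)) = X ^ m - C c) (i : ι) : γ i ^ m = c := by
  have := congrArg (eval (γ i)) h
  rw [eval_prod, prod_eq_zero (mem_univ i) (by simp)] at this
  simp only [eval_sub, eval_pow, eval_X, eval_C] at this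
  linear_combination -this

theorem sum_pow_eq_zero_of_prod_X_sub_C_eq {ι : Type*} [Fintype ι] {γ : ι → K} {m j : ℕ}
    {c : K} (hc : c ≠ 0) (hm : (m : K) ≠ 0) (h : ∏ i, (X - C (γ i)) = X ^ m - C c)
    (hj₀ : 0 < j) (hjm : j < m) : ∑ i, γ i ^ j = 0 := by
  classical
  have hγ : Function.Injective γ :=
    Separable.injective_of_prod_X_sub_C (h ▸ separable_X_pow_sub_C c hm hc)
  have hcard : Fintype.card ι = m := by
    simpa [natDegree_X_pow_sub_C] using congrArg natDegree h
  have himage : univ.image γ = nthRootsFinset m c :=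
    eq_of_subset_of_card_le
      (fun x hx => by
        obtain ⟨i, -, rfl⟩ := mem_image.mp hx
        exact (mem_nthRootsFinset (by omega) c).mpr (pow_eq_of_prod_X_sub_C_eq h i))
      (by
        rw [card_image_of_injective _ hγ, card_univ, hcard]
        exact card_nthRootsFinset_le m c)
  have hcardS : #(nthRootsFinset m c) = m := by
    rw [← himage, card_image_of_injective _ hγ, card_univ, hcard]
  calc ∑ i, γ i ^ j = ∑ x ∈ univ.image γ, x ^ j := (sum_image fun i _ i' _ h => hγ h).symm
    _ = 0 := himage ▸ sum_pow_nthRootsFinset_eq_zero hc hcardS hj₀ hjm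

end PowerSums

section SplitPoints

variable {K : Type*} [Field K] {n : ℕ} {β : K} {α : Fin n → K}

theorem prod_X_sub_C_cons_eq
    (hsplit : ∑ i ∈ range (n + 1), C (β ^ i) * X ^ (n - i) = ∏ i, (X - C (α i))) :
    ∏ i, (X - C ((Fin.cons β α : Fin (n + 1) → K) i)) = X ^ (n + 1) - C (β ^ (n + 1)) := by
  have hgeom := geom_sum₂_mul (C β) (X : K[X]) (n + 1)
  simp only [Nat.add_sub_cancel, ← map_pow] at hgeom
  rw [Fin.prod_univ_succ, Fin.cons_zero]
  simp only [Fin.cons_succ]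
  rw [← hsplit]
  linear_combination -hgeom

theorem split_map {L : Type*} [Field L] (φ : K →+* L)
    (hsplit : ∑ i ∈ range (n + 1), C (β ^ i) * X ^ (n - i) = ∏ i, (X - C (α i))) :
    ∑ i ∈ range (n + 1), C (φ β ^ i) * X ^ (n - i) = ∏ i, (X - C (φ (α i))) := by
  simpa [Polynomial.map_sum, Polynomial.map_prod] using congrArg (Polynomial.map φ) hsplit

theorem injective_cons_of_split (hβ : β ≠ 0) (hn : ((n + 1 : ℕ) : K) ≠ 0)
    (hsplit : ∑ i ∈ range (n + 1), C (β ^ i) * X ^ (n - i) = ∏ i, (X - C (α i))) :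
    Function.Injective (Fin.cons β α : Fin (n + 1) → K) :=
  Separable.injective_of_prod_X_sub_C <| (prod_X_sub_C_cons_eq hsplit) ▸
    separable_X_pow_sub_C _ hn (pow_ne_zero _ hβ)

theorem pow_succ_eq_of_split
    (hsplit : ∑ i ∈ range (n + 1), C (β ^ i) * X ^ (n - i) = ∏ i, (X - C (α i))) (i : Fin n) :
    α i ^ (n + 1) = β ^ (n + 1) :=
  pow_eq_of_prod_X_sub_C_eq (prod_X_sub_C_cons_eq hsplit) i.succ

theorem injective_of_split (hβ : β ≠ 0) (hn : ((n + 1 : ℕ) : K) ≠ 0)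
    (hsplit : ∑ i ∈ range (n + 1), C (β ^ i) * X ^ (n - i) = ∏ i, (X - C (α i))) :
    Function.Injective α :=
  (Fin.cons_injective_iff.mp (injective_cons_of_split hβ hn hsplit)).2

theorem mul_sub_ne_zero_of_split (hβ : β ≠ 0) (hn : ((n + 1 : ℕ) : K) ≠ 0)
    (hsplit : ∑ i ∈ range (n + 1), C (β ^ i) * X ^ (n - i) = ∏ i, (X - C (α i))) (i : Fin n) :
    α i * (α i - β) ≠ 0 := by
  refine mul_ne_zero (fun h => pow_ne_zero (n + 1) hβ ?_) (sub_ne_zero.mpr fun h => ?_)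
  · rw [← pow_succ_eq_of_split hsplit i, h, zero_pow n.succ_ne_zero]
  · exact (Fin.cons_injective_iff.mp (injective_cons_of_split hβ hn hsplit)).1 ⟨i, h⟩

theorem sum_pow_eq_neg_of_split (hβ : β ≠ 0) (hn : ((n + 1 : ℕ) : K) ≠ 0)
    (hsplit : ∑ i ∈ range (n + 1), C (β ^ i) * X ^ (n - i) = ∏ i, (X - C (α i)))
    {j : ℕ} (hj₀ : 0 < j) (hjn : j ≤ n) :
    ∑ i, α i ^ j = -β ^ j := by
  have := sum_pow_eq_zero_of_prod_X_sub_C_eq (pow_ne_zero _ hβ) hn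
    (prod_X_sub_C_cons_eq hsplit) hj₀ (by omega)
  rw [Fin.sum_univ_succ] at this
  simpa [eq_neg_iff_add_eq_zero, add_comm] using this

theorem sum_mul_sub_mul_pow_eq_zero_of_split (hβ : β ≠ 0) (hn : ((n + 1 : ℕ) : K) ≠ 0)
    (hsplit : ∑ i ∈ range (n + 1), C (β ^ i) * X ^ (n - i) = ∏ i, (X - C (α i)))
    {m : ℕ} (hm : m + 2 ≤ n) : ∑ i, α i * (α i - β) * α i ^ m = 0 := by
  have e : ∀ i, α i * (α i - β) * α i ^ m = α i ^ (m + 2) - β * α i ^ (m + 1) := fun i => by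
    ring
  simp only [e, sum_sub_distrib, ← mul_sum, sum_pow_eq_neg_of_split hβ hn hsplit (by omega) hm,
    sum_pow_eq_neg_of_split hβ hn hsplit (by omega : 0 < m + 1) (by omega)]
  ring

theorem sum_mul_sub_mul_pow_self_of_split (hβ : β ≠ 0) (hn : ((n + 1 : ℕ) : K) ≠ 0)
    (hsplit : ∑ i ∈ range (n + 1), C (β ^ i) * X ^ (n - i) = ∏ i, (X - C (α i))) :
    ∑ i, α i * (α i - β) * α i ^ n = -(β * ∑ i, α i * (α i - β) * α i ^ (n - 1)) := by
  rcases n with _ | n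
  · simp
  have e : ∀ i, α i * (α i - β) * α i ^ (n + 1) + β * (α i * (α i - β) * α i ^ (n + 1 - 1)) =
      β ^ (n + 2) * α i - β ^ 2 * α i ^ (n + 1) := fun i => by
    rw [Nat.add_sub_cancel]
    linear_combination α i * pow_succ_eq_of_split hsplit i
  have hsum₁ : ∑ i, α i = -β := by
    simpa using sum_pow_eq_neg_of_split hβ hn hsplit (j := 1) (by omega) (by omega)
  rw [eq_neg_iff_add_eq_zero, mul_sum, ← sum_add_distrib]
  simp only [e, sum_sub_distrib, ← mul_sum, hsum₁,
    sum_pow_eq_neg_of_split hβ hn hsplit (by omega : 0 < n + 1) le_rfl]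
  ring

end SplitPoints

section DotProduct

variable {K : Type*} [Field K] {n : ℕ}

theorem isSelfDual_of_finrank (W : Submodule K (Fin n → K))
    (hW : n = finrank K W + finrank K W) (horth : ∀ x ∈ W, ∀ y ∈ W, ∑ i, x i * y i = 0) :
    IsSelfDual (W : Set (Fin n → K)) := by
  let B : LinearMap.BilinForm K (Fin n → K) := dotProductBilin K K
  have hB : B.Nondegenerate := .ofSeparatingLeft fun x hx => dotProduct_eq_zero x hx
  have hdual : dualCode (W : Set (Fin n → K)) = B.orthogonal W := by
    ext x
    simp only [dualCode, Set.mem_ofPred_eq, SetLike.mem_coe,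
      LinearMap.BilinForm.mem_orthogonal_iff]
    refine forall₂_congr fun y _ => ?_
    simp [B, dotProduct, mul_comm]
  have hle : W ≤ B.orthogonal W := fun x hx =>
    LinearMap.BilinForm.mem_orthogonal_iff.mpr fun y hy => horth y hy x hx
  have hrank : finrank K (B.orthogonal W) ≤ finrank K W := by
    rw [LinearMap.BilinForm.finrank_orthogonal hB, finrank_fin_fun]
    omega
  rw [IsSelfDual, hdual]
  exact congrArg _ (Submodule.eq_of_le_of_finrank_le hle hrank)

end DotProduct

section TGRS

variable {K : Type*} [Field K] {n k : ℕ} {η : K}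

def tgrsTwist (k : ℕ) (η : K) : K[X] →ₗ[K] K[X] :=
  LinearMap.id + (lcoeff K (k - 1)).smulRight (C η * X ^ k)

theorem tgrsTwist_apply (f : K[X]) :
    tgrsTwist k η f = f + C (η * f.coeff (k - 1)) * X ^ k := by
  simp only [tgrsTwist, LinearMap.add_apply, LinearMap.id_apply, LinearMap.smulRight_apply,
    lcoeff_apply, smul_eq_C_mul, map_mul]
  ring

theorem coeff_tgrsTwist (f : K[X]) (m : ℕ) :
    (tgrsTwist k η f).coeff m = f.coeff m + if m = k then η * f.coeff (k - 1) else 0 := by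
  rw [tgrsTwist_apply, coeff_add, coeff_C_mul_X_pow]

theorem tgrsTwist_injective (hk : 0 < k) : Function.Injective (tgrsTwist k η) := by
  refine (injective_iff_map_eq_zero _).mpr fun f hf => ?_
  have hcoeff : f.coeff (k - 1) = 0 := by
    simpa [coeff_tgrsTwist, show k - 1 ≠ k by omega] using congrArg (coeff · (k - 1)) hf
  simpa [tgrsTwist_apply, hcoeff] using hf

def tgrsPolys (k : ℕ) (η : K) : Submodule K K[X] :=
  (degreeLT K k).map (tgrsTwist k η)

theorem mem_tgrsPolys (hk : 0 < k) {f : K[X]} :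
    f ∈ tgrsPolys k η ↔ f.natDegree ≤ k ∧ f.coeff k = η * f.coeff (k - 1) := by
  constructor
  · rintro ⟨g, hg, rfl⟩
    have hgk : ∀ m, k ≤ m → g.coeff m = 0 :=
      (degree_lt_iff_coeff_zero g k).mp (mem_degreeLT.mp hg)
    refine ⟨natDegree_le_iff_coeff_eq_zero.mpr fun m hm => ?_, ?_⟩
    · simp [coeff_tgrsTwist, hgk m hm.le, hm.ne']
    · simp [coeff_tgrsTwist, hgk k le_rfl, show k - 1 ≠ k by omega]
  · rintro ⟨hdeg, hcoeff⟩
    refine ⟨f - C (f.coeff k) * X ^ k, mem_degreeLT.mpr ?_, ?_⟩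
    · refine (degree_lt_iff_coeff_zero _ _).mpr fun m hm => ?_
      rcases hm.eq_or_lt with rfl | hlt
      · simp
      · simp [coeff_eq_zero_of_natDegree_lt (hdeg.trans_lt hlt), hlt.ne']
    · have : (f - C (f.coeff k) * X ^ k).coeff (k - 1) = f.coeff (k - 1) := by
        simp [show k - 1 ≠ k by omega]
      rw [tgrsTwist_apply, this, ← hcoeff, sub_add_cancel]

theorem finrank_tgrsPolys (hk : 0 < k) : finrank K (tgrsPolys k η) = k := by
  rw [tgrsPolys, ← (Submodule.equivMapOfInjective _ (tgrsTwist_injective hk) _).finrank_eq,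
    (degreeLTEquiv K k).finrank_eq, finrank_fin_fun]

variable {A v : Fin n → K}

def scaledEval (A v : Fin n → K) : K[X] →ₗ[K] Fin n → K :=
  LinearMap.pi fun i => v i • leval (A i)

theorem scaledEval_apply (f : K[X]) (i : Fin n) : scaledEval A v f i = v i * f.eval (A i) := rfl

theorem tgrsCode_eq_map (hk : 0 < k) :
    TGRSCode K n k A v η = (tgrsPolys k η).map (scaledEval A v) := by
  rw [tgrsPolys, ← Submodule.map_comp]
  ext c
  simp only [TGRSCode, Set.mem_ofPred_eq, SetLike.mem_coe, Submodule.mem_map,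
    LinearMap.comp_apply]
  constructor
  · rintro ⟨a, rfl⟩
    refine ⟨∑ j ∈ range k, C (a j) * X ^ j, sum_mem fun j hj => mem_degreeLT.mpr ?_, ?_⟩
    · exact (degree_C_mul_X_pow_le _ _).trans_lt (by exact_mod_cast mem_range.mp hj)
    · have hcoeff : (∑ j ∈ range k, C (a j) * X ^ j).coeff (k - 1) = a (k - 1) := by
        simp [finsetSum_coeff, hk]
      ext i
      rw [scaledEval_apply, tgrsTwist_apply, hcoeff]
      simp [eval_finsetSum]
  · rintro ⟨f, hf, rfl⟩
    refine ⟨f.coeff, funext fun i => ?_⟩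
    rw [scaledEval_apply, tgrsTwist_apply, eval_add, eval_eq_sum_degreeLTEquiv hf,
      ← Fin.sum_univ_eq_sum_range (fun j => f.coeff j * A i ^ j)]
    simp [degreeLTEquiv]

theorem eq_zero_of_scaledEval_eq_zero (hA : Function.Injective A) (hv : ∀ i, v i ≠ 0)
    {f : K[X]} (hf : f.natDegree < n) (h : scaledEval A v f = 0) : f = 0 :=
  eq_zero_of_natDegree_lt_card_of_eval_eq_zero f hA
    (fun i => (mul_eq_zero.mp (congrFun h i)).resolve_left (hv i)) (by simpa using hf)

theorem finrank_tgrsCode (hA : Function.Injective A) (hv : ∀ i, v i ≠ 0) (hk : 0 < k)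
    (hkn : k < n) : finrank K ((tgrsPolys k η).map (scaledEval A v)) = k := by
  have hinj : Function.Injective (scaledEval A v ∘ₗ (tgrsPolys k η).subtype) := by
    refine (injective_iff_map_eq_zero _).mpr fun f hf => Subtype.ext ?_
    exact eq_zero_of_scaledEval_eq_zero hA hv
      ((((mem_tgrsPolys hk).mp f.2).1).trans_lt hkn) hf
  rw [← Submodule.range_subtype (tgrsPolys k η), ← LinearMap.range_comp,
    LinearMap.finrank_range_of_inj hinj, finrank_tgrsPolys hk]

theorem hwt_scaledEval [DecidableEq K] (hv : ∀ i, v i ≠ 0) (f : K[X]) :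
    hwt (scaledEval A v f) = n - #{i | f.eval (A i) = 0} := by
  have hset : {i | scaledEval A v f i ≠ 0} = ↑({i | ¬f.eval (A i) = 0} : Finset (Fin n)) := by
    ext i
    simp [scaledEval_apply, hv i]
  have := card_filter_add_card_filter_not (s := univ) fun i => f.eval (A i) = 0
  rw [hwt, hset, Set.ncard_coe_finset]
  simp only [card_univ, Fintype.card_fin] at this
  omega

theorem card_eval_eq_zero_le [DecidableEq K] (hA : Function.Injective A) {f : K[X]} (hf : f ≠ 0) :
    #{i | f.eval (A i) = 0} ≤ f.natDegree := by
  by_contra! hlt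
  exact hf (eq_zero_of_degree_lt_of_eval_index_eq_zero _ hA.injOn
    (degree_le_natDegree.trans_lt (by exact_mod_cast hlt)) fun i hi => (mem_filter.mp hi).2)

theorem eq_C_mul_prod_of_eval_eq_zero (hA : Function.Injective A) {f : K[X]}
    {s : Finset (Fin n)} (hdeg : f.natDegree ≤ #s) (hs : ∀ i ∈ s, f.eval (A i) = 0) :
    f = C (f.coeff #s) * ∏ i ∈ s, (X - C (A i)) := by
  have hprod : (∏ i ∈ s, (X - C (A i))).Monic := monic_prod_of_monic _ _ fun i _ => monic_X_sub_C _
  have hprod_deg := natDegree_finsetProd_X_sub_C_eq_card s A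
  refine sub_eq_zero.mp (eq_zero_of_degree_lt_of_eval_index_eq_zero s hA.injOn
    ((degree_lt_iff_coeff_zero _ _).mpr fun m hm => ?_) fun i hi => ?_)
  · rcases hm.eq_or_lt with rfl | hlt
    · rw [coeff_sub, coeff_C_mul, ← hprod_deg, hprod.coeff_natDegree, mul_one, sub_self]
    · rw [coeff_sub, coeff_C_mul, coeff_eq_zero_of_natDegree_lt (hdeg.trans_lt hlt),
        coeff_eq_zero_of_natDegree_lt (hprod_deg.trans_lt hlt), mul_zero, sub_zero]
  · rw [eval_sub, eval_mul, eval_prod, prod_eq_zero hi (by simp), hs i hi, mul_zero, sub_zero]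

theorem sum_eq_neg_inv_of_eval_eq_zero (hA : Function.Injective A) (hk : 0 < k) {f : K[X]}
    (hf : f ∈ tgrsPolys k η) (hf0 : f ≠ 0) {s : Finset (Fin n)} (hs : #s = k)
    (hzero : ∀ i ∈ s, f.eval (A i) = 0) : ∑ i ∈ s, A i = -η⁻¹ := by
  obtain ⟨hdeg, hcoeff⟩ := (mem_tgrsPolys hk).mp hf
  have hfac := eq_C_mul_prod_of_eval_eq_zero hA (hs ▸ hdeg) hzero
  have hvieta := prod_X_sub_C_coeff_card_pred s A (by omega)
  rw [hs] at hfac hvieta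
  have hlead : f.coeff k ≠ 0 := fun h => hf0 (by rw [hfac, h, C_0, zero_mul])
  have hsub : f.coeff (k - 1) = f.coeff k * -∑ i ∈ s, A i := by
    conv_lhs => rw [hfac]
    rw [coeff_C_mul, hvieta]
  have hη : η * ∑ i ∈ s, A i = -1 := by
    rw [hsub] at hcoeff
    refine mul_left_cancel₀ hlead ?_
    linear_combination hcoeff
  have hη0 : η ≠ 0 := by
    rintro rfl
    simp at hη
  field_simp
  linear_combination hη

theorem sub_le_hwt_of_mem_tgrsCode (hA : Function.Injective A) (hv : ∀ i, v i ≠ 0)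
    (hk : 0 < k) (hkn : k ≤ n) {c : Fin n → K} (hc : c ∈ TGRSCode K n k A v η) (hc0 : c ≠ 0) :
    n - k ≤ hwt c ∧ (hwt c = n - k → ∃ I : Finset (Fin n), #I = k ∧ ∑ i ∈ I, A i = -η⁻¹) := by
  classical
  rw [tgrsCode_eq_map hk] at hc
  obtain ⟨f, hf, rfl⟩ := hc
  have hf0 : f ≠ 0 := by
    rintro rfl
    exact hc0 (map_zero _)
  have hZk := (card_eval_eq_zero_le hA hf0).trans ((mem_tgrsPolys hk).mp hf).1
  have hZn : #{i | f.eval (A i) = 0} ≤ n := (card_filter_le _ _).trans (by simp)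
  rw [hwt_scaledEval hv]
  refine ⟨by omega, fun h => ⟨({i | f.eval (A i) = 0} : Finset _), by omega,
    sum_eq_neg_inv_of_eval_eq_zero hA hk hf hf0 (by omega) fun i hi => (mem_filter.mp hi).2⟩⟩

theorem exists_mem_tgrsCode_hwt_le (hA : Function.Injective A) (hv : ∀ i, v i ≠ 0)
    (hk : 0 < k) (hkn : k < n) (hη : η ≠ 0) {R : Multiset K} (hR : Multiset.card R = k)
    (hsum : R.sum = -η⁻¹) {J : Finset (Fin n)} (hJ : ∀ i ∈ J, A i ∈ R) :
    ∃ c ∈ TGRSCode K n k A v η, c ≠ 0 ∧ hwt c ≤ n - #J := by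
  classical
  set f := (R.map (X - C ·)).prod
  have hmonic : f.Monic := monic_multiset_prod_of_monic _ _ fun r _ => monic_X_sub_C r
  have hdeg : f.natDegree = k := by rw [natDegree_multiset_prod_X_sub_C_eq_card, hR]
  have hf : f ∈ tgrsPolys k η := by
    have hvieta := multiset_prod_X_sub_C_coeff_card_pred R (by omega)
    rw [hR, hsum, neg_neg] at hvieta
    refine (mem_tgrsPolys hk).mpr ⟨hdeg.le, ?_⟩
    rw [hvieta, mul_inv_cancel₀ hη, ← hdeg, hmonic.coeff_natDegree]
  refine ⟨scaledEval A v f, ?_, fun h => hmonic.ne_zero ?_, ?_⟩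
  · rw [tgrsCode_eq_map hk]
    exact Submodule.mem_map_of_mem hf
  · exact eq_zero_of_scaledEval_eq_zero hA hv (hdeg ▸ hkn) h
  · rw [hwt_scaledEval hv]
    refine Nat.sub_le_sub_left (card_le_card fun i hi => mem_filter.mpr ⟨mem_univ _, ?_⟩) n
    exact isRoot_of_mem_roots (by rw [roots_multiset_prod_X_sub_C]; exact hJ i hi)

theorem isMinDist_tgrsCode_of_forall_sum_ne (hA : Function.Injective A) (hv : ∀ i, v i ≠ 0)
    (hk : 0 < k) (hkn : k < n) (hη : η ≠ 0)
    (hno : ∀ I : Finset (Fin n), #I = k → ∑ i ∈ I, A i ≠ -η⁻¹) :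
    IsMinDist (TGRSCode K n k A v η) (n - k + 1) := by
  have hlow : ∀ c ∈ TGRSCode K n k A v η, c ≠ 0 → n - k + 1 ≤ hwt c := fun c hc hc0 => by
    obtain ⟨hle, heq⟩ := sub_le_hwt_of_mem_tgrsCode hA hv hk hkn.le hc hc0
    by_contra! hlt
    obtain ⟨I, hI, hsum⟩ := heq (by omega)
    exact hno I hI hsum
  obtain ⟨J, -, hJ⟩ := exists_subset_card_eq (s := (univ : Finset (Fin n))) (n := k - 1)
    (by simp; omega)
  obtain ⟨c, hc, hc0, hwtc⟩ := exists_mem_tgrsCode_hwt_le hA hv hk hkn hη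
    (R := (-η⁻¹ - ∑ i ∈ J, A i) ::ₘ J.val.map A) (by simp [hJ]; omega)
    (by rw [Multiset.sum_cons, ← sum_eq_multiset_sum, sub_add_cancel]) fun i hi => Multiset.mem_cons_of_mem (Multiset.mem_map_of_mem _ hi)
  exact ⟨⟨c, hc, hc0, le_antisymm (hwtc.trans (by omega)) (hlow c hc hc0)⟩, hlow⟩

theorem isMinDist_tgrsCode_of_exists_sum_eq (hA : Function.Injective A) (hv : ∀ i, v i ≠ 0)
    (hk : 0 < k) (hkn : k < n) (hη : η ≠ 0)
    (hI : ∃ I : Finset (Fin n), #I = k ∧ ∑ i ∈ I, A i = -η⁻¹) :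
    IsMinDist (TGRSCode K n k A v η) (n - k) := by
  obtain ⟨I, hI, hsum⟩ := hI
  have hlow : ∀ c ∈ TGRSCode K n k A v η, c ≠ 0 → n - k ≤ hwt c := fun c hc hc0 =>
    (sub_le_hwt_of_mem_tgrsCode hA hv hk hkn.le hc hc0).1
  obtain ⟨c, hc, hc0, hwtc⟩ := exists_mem_tgrsCode_hwt_le hA hv hk hkn hη
    (R := I.val.map A) (by simp [hI]) hsum fun i hi => Multiset.mem_map_of_mem _ hi
  exact ⟨⟨c, hc, hc0, le_antisymm (hI ▸ hwtc) (hlow c hc hc0)⟩, hlow⟩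

end TGRS

section SelfDual

variable {K : Type*} [Field K] {n k : ℕ} {A v : Fin n → K} {b : K}

theorem coeff_mul_add_sub_one {p q : K[X]} {m l : ℕ} (hm : 0 < m) (hl : 0 < l)
    (hp : p.natDegree ≤ m) (hq : q.natDegree ≤ l) :
    (p * q).coeff (m + l - 1) = p.coeff (m - 1) * q.coeff l + p.coeff m * q.coeff (l - 1) := by
  rw [coeff_mul, sum_eq_add_of_mem (m - 1, l) (m, l - 1) (by simp; omega) (by simp; omega)
    (by simp; omega)]
  rintro ⟨i, j⟩ hij hne
  rw [HasAntidiagonal.mem_antidiagonal] at hij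
  by_cases hi : m < i
  · rw [coeff_eq_zero_of_natDegree_lt (hp.trans_lt hi), zero_mul]
  · rw [coeff_eq_zero_of_natDegree_lt (hq.trans_lt (by simp at hij hne; omega)), mul_zero]

theorem sum_mul_eval_eq_sum_coeff (w : Fin n → K) {N : ℕ} {p : K[X]} (hp : p.natDegree ≤ N) :
    ∑ i, w i * p.eval (A i) = ∑ m ∈ range (N + 1), p.coeff m * ∑ i, w i * A i ^ m := by
  simp only [eval_eq_sum_range' (Nat.lt_succ_of_le hp), mul_sum]
  rw [sum_comm]
  exact sum_congr rfl fun m _ => sum_congr rfl fun i _ => by ring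

theorem sum_mul_eval_mul_eq_zero (hb : b ≠ 0) (hk : 0 < k) (hn : n = k + k) (w : Fin n → K)
    (hM₀ : ∀ m < n - 1, ∑ i, w i * A i ^ m = 0)
    (hM : ∑ i, w i * A i ^ n = -(b * ∑ i, w i * A i ^ (n - 1)))
    {f g : K[X]} (hf : f ∈ tgrsPolys k (2 * b⁻¹)) (hg : g ∈ tgrsPolys k (2 * b⁻¹)) :
    ∑ i, w i * (f * g).eval (A i) = 0 := by
  obtain ⟨hfdeg, hfk⟩ := (mem_tgrsPolys hk).mp hf
  obtain ⟨hgdeg, hgk⟩ := (mem_tgrsPolys hk).mp hg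
  have htop : (f * g).coeff n = f.coeff k * g.coeff k := hn ▸ coeff_mul_add_eq_of_natDegree_le hfdeg hgdeg
  have hsub : (f * g).coeff (n - 1) = f.coeff (k - 1) * g.coeff k + f.coeff k * g.coeff (k - 1) :=
    hn ▸ coeff_mul_add_sub_one hk hk hfdeg hgdeg
  rw [sum_mul_eval_eq_sum_coeff w (hn ▸ natDegree_mul_le_of_le hfdeg hgdeg),
    show n + 1 = n - 1 + 1 + 1 by omega, sum_range_succ, sum_range_succ,
    sum_eq_zero fun m hm => by rw [hM₀ m (mem_range.mp hm), mul_zero],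
    show n - 1 + 1 = n by omega, hM, htop, hsub, hfk, hgk]
  linear_combination (-4 * b⁻¹ * f.coeff (k - 1) * g.coeff (k - 1) *
    ∑ i, w i * A i ^ (n - 1)) * mul_inv_cancel₀ hb

theorem isSelfDual_tgrsCode (hA : Function.Injective A) (hv : ∀ i, v i ≠ 0) (hb : b ≠ 0)
    (hk : 0 < k) (hn : n = k + k) (hM₀ : ∀ m < n - 1, ∑ i, v i ^ 2 * A i ^ m = 0)
    (hM : ∑ i, v i ^ 2 * A i ^ n = -(b * ∑ i, v i ^ 2 * A i ^ (n - 1))) :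
    IsSelfDual (TGRSCode K n k A v (2 * b⁻¹)) := by
  rw [tgrsCode_eq_map hk]
  refine isSelfDual_of_finrank _ (by rw [finrank_tgrsCode hA hv hk (by omega)]; exact hn) ?_
  rintro _ ⟨f, hf, rfl⟩ _ ⟨g, hg, rfl⟩
  rw [← sum_mul_eval_mul_eq_zero hb hk hn _ hM₀ hM hf hg]
  refine sum_congr rfl fun i _ => ?_
  simp only [scaledEval_apply, eval_mul]
  ring

end SelfDual

theorem isSelfDual_tgrsCode_of_split {K : Type*} [Field K] {k : ℕ} {β : K}
    {α v : Fin (k + k) → K} (hβ : β ≠ 0) (hn : ((k + k + 1 : ℕ) : K) ≠ 0) (hk : 0 < k)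
    (hsplit : ∑ i ∈ range (k + k + 1), C (β ^ i) * X ^ (k + k - i) = ∏ i, (X - C (α i)))
    (hv : ∀ i, v i ^ 2 = α i * (α i - β)) :
    IsSelfDual (TGRSCode K (k + k) k α v (2 * β⁻¹)) := by
  have hv0 : ∀ i, v i ≠ 0 := fun i h =>
    mul_sub_ne_zero_of_split hβ hn hsplit i (by rw [← hv i, h, zero_pow two_ne_zero])
  refine isSelfDual_tgrsCode (injective_of_split hβ hn hsplit) hv0 hβ hk rfl
    (fun m hm => ?_) ?_ <;> simp only [hv]
  · exact sum_mul_sub_mul_pow_eq_zero_of_split hβ hn hsplit (by omega)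
  · exact sum_mul_sub_mul_pow_self_of_split hβ hn hsplit

theorem tgrs_selfdual_mds_or_nmds_cyclotomic_general (q n : ℕ) (hq : Odd q)
    (hn6 : 6 ≤ n) (hneven : Even n) (hdvd : (n + 1) ∣ (q - 1))
    (Fq : Type*) [Field Fq] [Fintype Fq] (hcardq : Fintype.card Fq = q)
    (F : Type*) [Field F] [Algebra Fq F]
    (β : Fq) (hβ : β ≠ 0)
    (α : Fin n → Fq)
    (hsplit : (∑ i ∈ Finset.range (n + 1), Polynomial.C (β ^ i) * X ^ (n - i)
        : Fq[X]) = ∏ i, (X - Polynomial.C (α i)))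
    (v : Fin n → F)
    (hv : ∀ i, v i ^ 2 = algebraMap Fq F (α i) * (algebraMap Fq F (α i)
      - algebraMap Fq F β)) :
    ((∀ I : Finset (Fin n), I.card = n / 2 → ∑ i ∈ I, α i ≠ -β / 2) →
      IsSelfDual (TGRSCode F n (n / 2) (fun i => algebraMap Fq F (α i)) v
          (2 * (algebraMap Fq F β)⁻¹)) ∧
        IsMinDist (TGRSCode F n (n / 2) (fun i => algebraMap Fq F (α i)) v
          (2 * (algebraMap Fq F β)⁻¹)) (n - n / 2 + 1)) ∧
    ((∃ I : Finset (Fin n), I.card = n / 2 ∧ ∑ i ∈ I, α i = -β / 2) →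
      IsSelfDual (TGRSCode F n (n / 2) (fun i => algebraMap Fq F (α i)) v
          (2 * (algebraMap Fq F β)⁻¹)) ∧
        IsMinDist (TGRSCode F n (n / 2) (fun i => algebraMap Fq F (α i)) v
          (2 * (algebraMap Fq F β)⁻¹)) (n - n / 2) ∧
        IsMinDist (dualCode (TGRSCode F n (n / 2)
          (fun i => algebraMap Fq F (α i)) v (2 * (algebraMap Fq F β)⁻¹))) (n / 2)) := by
  obtain ⟨k, rfl⟩ := hneven
  rw [show (k + k) / 2 = k by omega]
  have hk : 0 < k := by omega
  set b := algebraMap Fq F β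
  have hb : b ≠ 0 := (_root_.map_ne_zero _).mpr hβ
  have hnF : ((k + k + 1 : ℕ) : F) ≠ 0 := by
    rw [← map_natCast (algebraMap Fq F), _root_.map_ne_zero]
    exact FiniteField.natCast_ne_zero_of_dvd_card_sub_one (hcardq ▸ hdvd)
  have hη : 2 * b⁻¹ ≠ 0 := by
    rw [← map_ofNat (algebraMap Fq F), ← map_inv₀, ← map_mul, _root_.map_ne_zero]
    exact mul_ne_zero (FiniteField.two_ne_zero_of_odd_card (hcardq ▸ hq)) (inv_ne_zero hβ)
  have hsplitF := split_map (algebraMap Fq F) hsplit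
  have hA := injective_of_split hb hnF hsplitF
  have hv0 : ∀ i, v i ≠ 0 := fun i h =>
    mul_sub_ne_zero_of_split hb hnF hsplitF i (by rw [← hv i, h, zero_pow two_ne_zero])
  have hself := isSelfDual_tgrsCode_of_split hb hnF hk hsplitF hv
  have hsum (I : Finset (Fin (k + k))) :
      ∑ i ∈ I, algebraMap Fq F (α i) = -(2 * b⁻¹)⁻¹ ↔ ∑ i ∈ I, α i = -β / 2 := by
    rw [show -(2 * b⁻¹)⁻¹ = algebraMap Fq F (-β / 2) by simp [b, map_ofNat]; ring, ← map_sum]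
    exact (algebraMap Fq F).injective.eq_iff
  refine ⟨fun hno => ⟨hself, ?_⟩, fun ⟨I, hI, hIsum⟩ => ?_⟩
  · exact isMinDist_tgrsCode_of_forall_sum_ne hA hv0 hk (by omega) hη
      fun I hI h => hno I hI ((hsum I).mp h)
  · have hmd := isMinDist_tgrsCode_of_exists_sum_eq hA hv0 hk (by omega) hη
      ⟨I, hI, (hsum I).mpr hIsum⟩
    rw [show k + k - k = k by omega] at hmd ⊢
    exact ⟨hself, hmd, hself ▸ hmd⟩

/-- in the setting of the construction from
`m(x) = (x^{n+1} - β^{n+1})/(x - β)` over `F_q`, with `v_i ∈ F_{q²}` satisfying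
`v_i² = α_i(α_i - β)` and `η = 2β⁻¹`: if `Σ_{i∈I} α_i ≠ -β/2` for every `I` of size
`n/2` then `C_{n/2}(α,v,η)` is a self-dual MDS code over `F_{q²}`; otherwise it is a
self-dual NMDS code over `F_{q²}`. -/
theorem tgrs_selfdual_mds_or_nmds_cyclotomic (q n : ℕ) (hq : Odd q)
    (hqpp : IsPrimePow q) (hn6 : 6 ≤ n) (hneven : Even n) (hdvd : (n + 1) ∣ (q - 1))
    (Fq : Type*) [Field Fq] [Fintype Fq] (hcardq : Fintype.card Fq = q)
    (F : Type*) [Field F] [Fintype F] [Algebra Fq F]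
    (hcardF : Fintype.card F = q ^ 2)
    (β : Fq) (hβ : β ≠ 0)
    (α : Fin n → Fq)
    (hsplit : (∑ i ∈ Finset.range (n + 1), Polynomial.C (β ^ i) * X ^ (n - i)
        : Fq[X]) = ∏ i, (X - Polynomial.C (α i)))
    (v : Fin n → F)
    (hv : ∀ i, v i ^ 2 = algebraMap Fq F (α i) * (algebraMap Fq F (α i)
      - algebraMap Fq F β)) :
    ((∀ I : Finset (Fin n), I.card = n / 2 → ∑ i ∈ I, α i ≠ -β / 2) →
      IsSelfDual (TGRSCode F n (n / 2) (fun i => algebraMap Fq F (α i)) v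
          (2 * (algebraMap Fq F β)⁻¹)) ∧
        IsMinDist (TGRSCode F n (n / 2) (fun i => algebraMap Fq F (α i)) v
          (2 * (algebraMap Fq F β)⁻¹)) (n - n / 2 + 1)) ∧
    ((∃ I : Finset (Fin n), I.card = n / 2 ∧ ∑ i ∈ I, α i = -β / 2) →
      IsSelfDual (TGRSCode F n (n / 2) (fun i => algebraMap Fq F (α i)) v
          (2 * (algebraMap Fq F β)⁻¹)) ∧
        IsMinDist (TGRSCode F n (n / 2) (fun i => algebraMap Fq F (α i)) v
          (2 * (algebraMap Fq F β)⁻¹)) (n - n / 2) ∧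
        IsMinDist (dualCode (TGRSCode F n (n / 2)
          (fun i => algebraMap Fq F (α i)) v (2 * (algebraMap Fq F β)⁻¹))) (n / 2)) :=
  tgrs_selfdual_mds_or_nmds_cyclotomic_general q n hq hn6 hneven hdvd Fq hcardq F β hβ α hsplit v hv
end
end

section
/- Let F be a field, k ≥ 1 an integer, η ∈ F, and x_1,…,x_k ∈ F. Let M be the k×k matrix whose (i,j)-entry is x_j^{i−1} for 1 ≤ i ≤ k−1 and whose last row has entries x_j^{k−1} + η x_j^k (1 ≤ j ≤ k). Then det(M) = ∏_{1 ≤ s < t ≤ k} (x_t − x_s) · (1 + η Σ_{s=1}^k x_s). -/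
/-!
Each `x_j` is a root of `p = ∏ s, (X - C (x s))`, so the row `(x_j ^ k)_j` is the combination
`-∑ i, p.coeff i • (x_j ^ i)_j` of the Vandermonde rows. Replacing one row `i` of the Vandermonde
matrix by it therefore multiplies the determinant by `-p.coeff i`, which for `i = k - 1` is
`∑ s, x s` by Vieta.
-/

open Finset

section

open Polynomial Matrix

variable {R : Type*} [CommRing R] [Nontrivial R] {n : ℕ}

theorem pow_card_eq_neg_sum_coeff_prod_X_sub_C_mul_pow (x : Fin n → R) (j : Fin n) :
    x j ^ n = -∑ i : Fin n, (∏ s, (X - C (x s))).coeff i * x j ^ (i : ℕ) := by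
  set p : R[X] := ∏ s, (X - C (x s))
  have hdeg : p.natDegree = n := by simp [p]
  have hroot : p.eval (x j) = 0 := by
    simp only [p, eval_prod]
    exact prod_eq_zero (mem_univ j) (by simp)
  have hexpand := eval_eq_sum_range' (n := n + 1) (by omega : p.natDegree < n + 1) (x j)
  rw [sum_range_succ, ← hdeg, (monic_prod_X_sub_C x univ).coeff_natDegree, hdeg, hroot,
    ← Fin.sum_univ_eq_sum_range] at hexpand
  linear_combination -hexpand

theorem det_updateRow_vandermonde_transpose_pow_card (x : Fin n → R) (i : Fin n) :
    ((vandermonde x)ᵀ.updateRow i fun j => x j ^ n).det =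
      -(∏ s, (X - C (x s))).coeff i * (vandermonde x).det := by
  have hrow : (fun j => x j ^ n) =
      ∑ l, (-(∏ s, (X - C (x s))).coeff l) • (vandermonde x)ᵀ l := by
    ext j
    simp [pow_card_eq_neg_sum_coeff_prod_X_sub_C_mul_pow x j, vandermonde, Finset.sum_apply]
  rw [hrow, det_updateRow_sum, det_transpose, smul_eq_mul]

theorem det_updateRow_last_vandermonde_transpose (x : Fin (n + 1) → R) (η : R) :
    ((vandermonde x)ᵀ.updateRow (Fin.last n)
        fun j => x j ^ n + η * x j ^ (n + 1)).det =
      (vandermonde x).det * (1 + η * ∑ s, x s) := by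
  have hlast : (vandermonde x)ᵀ (Fin.last n) = fun j => x j ^ n := by
    ext j; simp [vandermonde]
  have hcoeff : (∏ s, (X - C (x s))).coeff n = -∑ s, x s := by
    simpa using prod_X_sub_C_coeff_card_pred univ x (by simp)
  rw [show (fun j => x j ^ n + η * x j ^ (n + 1)) =
      (vandermonde x)ᵀ (Fin.last n) + η • fun j => x j ^ (n + 1) by
      rw [hlast]; rfl,
    det_updateRow_add, updateRow_eq_self, det_updateRow_smul,
    det_updateRow_vandermonde_transpose_pow_card, det_transpose, Fin.val_last, hcoeff]
  ring

end

theorem twisted_vandermonde_det_general (F : Type*) [Field F] (k : ℕ)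
    (η : F) (x : Fin k → F) :
    Matrix.det (Matrix.of fun i j : Fin k =>
      if (i : ℕ) < k - 1 then x j ^ (i : ℕ) else x j ^ (k - 1) + η * x j ^ k) =
    (∏ s : Fin k, ∏ t ∈ Finset.Ioi s, (x t - x s)) * (1 + η * ∑ s, x s) := by
  cases k with
  | zero => simp
  | succ n =>
    rw [← Matrix.det_vandermonde, ← det_updateRow_last_vandermonde_transpose]
    congr 1
    ext i j
    rcases i.eq_castSucc_or_eq_last with ⟨i, rfl⟩ | rfl
    · simp [Matrix.vandermonde]
    · simp

/-- the determinant of the twisted Vandermonde matrix whose rows are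
`(x_j^{i})_j` for `0 ≤ i ≤ k-2` and whose last row is `(x_j^{k-1} + η x_j^k)_j`
equals `∏_{s<t} (x_t - x_s) · (1 + η Σ_s x_s)`. -/
theorem twisted_vandermonde_det (F : Type*) [Field F] (k : ℕ) (hk : 1 ≤ k)
    (η : F) (x : Fin k → F) :
    Matrix.det (Matrix.of fun i j : Fin k =>
      if (i : ℕ) < k - 1 then x j ^ (i : ℕ) else x j ^ (k - 1) + η * x j ^ k) =
    (∏ s : Fin k, ∏ t ∈ Finset.Ioi s, (x t - x s)) * (1 + η * ∑ s, x s) :=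
  twisted_vandermonde_det_general F k η x
end
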